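/- arXiv:2111.06153 — 2 statements merged into one kernel-verified Lean document; each statement's English description precedes it below -/
import Mathlib

section
/- Let K be a field with a discrete valuation v : K^× → ℤ, and let c, d be elements of the valuation ring with v(c − d) = 0. Let x ∈ K be nonzero with x + c ≠ 0 and x + d ≠ 0. If v(x) is even and v(x + c) + v(x + d) is even, then v(x + c) is even. -/
/-- The multiplicative value in `ℤₘ₀ = WithZero (Multiplicative ℤ)` corresponding to an element
of additive valuation `k ∈ ℤ` (so larger `k` means more divisible, i.e. smaller `ofVal k`). -/
def ofVal (k : ℤ) : WithZero (Multiplicative ℤ) :=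
  (Multiplicative.ofAdd (-k) : Multiplicative ℤ)

lemma ofVal_inj {a b : ℤ} (h : ofVal a = ofVal b) : a = b := by
  simpa [ofVal] using h

lemma ofVal_eq_one {a : ℤ} (h : ofVal a = 1) : a = 0 := by
  have := ofVal_inj (b := 0) (by simpa [ofVal] using h)
  simpa using this

/-- Let `v` be a normalized discrete valuation on a field `K`, and let `c, d` be elements of
the valuation ring with `v(c - d) = 0`. Let `x ≠ 0` with `x + c ≠ 0` and `x + d ≠ 0`.
If `v(x)` is even and `v(x + c) + v(x + d)` is even, then `v(x + c)` is even.
(Here the additive valuation of `t ≠ 0` is the integer `k` with `v t = ofVal k`.) -/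
theorem stmt_7 {K : Type*} [Field K] (v : Valuation K (WithZero (Multiplicative ℤ)))
    (hsurj : Function.Surjective v)
    (c d : K) (hc : v c ≤ 1) (hd : v d ≤ 1) (hcd : v (c - d) = 1)
    (x : K) (hx0 : x ≠ 0) (hxc0 : x + c ≠ 0) (hxd0 : x + d ≠ 0)
    (hxeven : ∃ k : ℤ, Even k ∧ v x = ofVal k)
    (hsum : ∃ j k : ℤ, v (x + c) = ofVal j ∧ v (x + d) = ofVal k ∧ Even (j + k)) :
    ∃ j : ℤ, Even j ∧ v (x + c) = ofVal j := by
  obtain ⟨k, hk, hvx⟩ := hxeven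
  obtain ⟨j, l, hvj, hvl, hjl⟩ := hsum
  refine ⟨j, ?_, hvj⟩
  by_cases h : v x ≤ 1
  · -- both v(x+c), v(x+d) ≤ 1 and their difference has valuation 1
    have hdiff : v ((x + c) - (x + d)) = 1 := by
      have : (x + c) - (x + d) = c - d := by ring
      rw [this, hcd]
    have hmax : (1 : WithZero (Multiplicative ℤ)) ≤ max (v (x + c)) (v (x + d)) := by
      rw [← hdiff]; exact v.map_sub _ _
    rcases le_max_iff.mp hmax with h1 | h1
    · have hle : v (x + c) ≤ 1 :=
        le_trans (v.map_add x c) (max_le h hc)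
      have : v (x + c) = 1 := le_antisymm hle h1
      have hj0 : j = 0 := ofVal_eq_one (hvj ▸ this)
      simp [hj0]
    · have hle : v (x + d) ≤ 1 :=
        le_trans (v.map_add x d) (max_le h hd)
      have : v (x + d) = 1 := le_antisymm hle h1
      have hl0 : l = 0 := ofVal_eq_one (hvl ▸ this)
      simpa [hl0] using hjl
  · -- v x > 1 > v c, so v(x+c) = v x, which is even
    push_neg at h
    have hlt : v c < v x := lt_of_le_of_lt hc h
    have : v (x + c) = v x := v.map_add_eq_of_lt_left hlt
    have hjk : j = k := ofVal_inj (by rw [← hvj, ← hvx, this])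
    exact hjk ▸ hk
end

section
/- Let S be a finite extension of ℚ_3 with normalized valuation v in which −1 is not a square, and suppose x, y, z, w in the valuation ring satisfy w² = −6x⁴ − 3y⁴ + 2z⁴ with min(v(x), v(y), v(z), v(w)) = 0. Then v(z) > 0 and v(w) > 0. -/
/-!
If `v z ≥ 1`, then `s = w / z ^ 2` satisfies `v (s ^ 2 + 1) ≤ v 3 < 1` because
`w ^ 2 + z ^ 4 = 3 (z ^ 4 - 2 x ^ 4 - y ^ 4)`, and Newton's iteration for `X ^ 2 + 1` starting
at `s` converges to a square root of `-1`. Convergence needs `S` to be complete for the norm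
`b ^ log (v ·)`. With `b` chosen so that `‖3‖ = 1 / 3`, this norm restricts to the `3`-adic
norm on `ℚ_[3]`: `v` is trivial on `3`-adic units `u`, since by Hensel's lemma
`u ^ 2 ∈ 1 + 3 ℤ_[3]` has `2 ^ n`-th roots for all `n`. So `S` is a finite-dimensional normed
space over `ℚ_[3]`, hence complete. Once `v z < 1`, the identity
`w ^ 2 = 2 z ^ 4 - 3 (2 x ^ 4 + y ^ 4)` gives `v w < 1`.
-/

open Filter Topology WithZero NNReal

section SqrtNewton

variable {K : Type*}

def newtonSqrtStep [Field K] (c t : K) : K := t - (t ^ 2 - c) / (2 * t)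

lemma newtonSqrtStep_sq_sub [Field K] {c t : K} (h2 : (2 : K) ≠ 0) (ht : t ≠ 0) :
    newtonSqrtStep c t ^ 2 - c = ((t ^ 2 - c) / (2 * t)) ^ 2 := by
  unfold newtonSqrtStep
  field_simp
  ring

variable [NormedField K] {c s t : K}

lemma norm_newtonSqrtStep_sub (h2 : ‖(2 : K)‖ = 1) (ht : ‖t‖ = 1) :
    ‖newtonSqrtStep c t - t‖ = ‖t ^ 2 - c‖ := by
  simp [newtonSqrtStep, h2, ht]

lemma norm_sq_newtonSqrtStep_sub (h2 : ‖(2 : K)‖ = 1) (ht : ‖t‖ = 1) :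
    ‖newtonSqrtStep c t ^ 2 - c‖ = ‖t ^ 2 - c‖ ^ 2 := by
  rw [newtonSqrtStep_sq_sub (norm_ne_zero_iff.mp (h2 ▸ one_ne_zero))
    (norm_ne_zero_iff.mp (ht ▸ one_ne_zero))]
  simp [h2, ht]

variable [IsUltrametricDist K]

open IsUltrametricDist

lemma norm_newtonSqrtStep (h2 : ‖(2 : K)‖ = 1) (ht : ‖t‖ = 1) (htc : ‖t ^ 2 - c‖ < 1) :
    ‖newtonSqrtStep c t‖ = 1 := by
  have hne : ‖newtonSqrtStep c t - t‖ ≠ ‖t‖ := by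
    rw [norm_newtonSqrtStep_sub h2 ht, ht]; exact htc.ne
  rw [← sub_add_cancel (newtonSqrtStep c t) t, norm_add_eq_max_of_norm_ne_norm hne,
    norm_newtonSqrtStep_sub h2 ht, ht, max_eq_right htc.le]

/-- The convergence is quadratic, but the linear rate `‖s ^ 2 - c‖ ^ (n + 1)` suffices. -/
lemma norm_iterate_newtonSqrtStep (h2 : ‖(2 : K)‖ = 1) (hs : ‖s‖ = 1)
    (hsc : ‖s ^ 2 - c‖ < 1) (n : ℕ) : ‖(newtonSqrtStep c)^[n] s‖ = 1 ∧
      ‖((newtonSqrtStep c)^[n] s) ^ 2 - c‖ ≤ ‖s ^ 2 - c‖ ^ (n + 1) := by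
  induction n with
  | zero => simp [hs]
  | succ n ih =>
    obtain ⟨hnorm, hbound⟩ := ih
    have hlt : ‖((newtonSqrtStep c)^[n] s) ^ 2 - c‖ < 1 :=
      hbound.trans_lt (pow_lt_one₀ (norm_nonneg _) hsc n.succ_ne_zero)
    rw [Function.iterate_succ_apply']
    refine ⟨norm_newtonSqrtStep h2 hnorm hlt, ?_⟩
    calc ‖newtonSqrtStep c ((newtonSqrtStep c)^[n] s) ^ 2 - c‖
        = ‖((newtonSqrtStep c)^[n] s) ^ 2 - c‖ ^ 2 := norm_sq_newtonSqrtStep_sub h2 hnorm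
      _ ≤ (‖s ^ 2 - c‖ ^ (n + 1)) ^ 2 := by gcongr
      _ ≤ ‖s ^ 2 - c‖ ^ (n + 1 + 1) := by
        rw [← pow_mul]
        exact pow_le_pow_of_le_one (norm_nonneg _) hsc.le (by omega)

theorem exists_sq_eq_of_norm_sq_sub_lt_one [CompleteSpace K] (h2 : ‖(2 : K)‖ = 1)
    (hc : ‖c‖ = 1) (hsc : ‖s ^ 2 - c‖ < 1) : ∃ t : K, t ^ 2 = c := by
  have hs : ‖s‖ = 1 := by
    have hne : ‖s ^ 2 - c‖ ≠ ‖c‖ := by rw [hc]; exact hsc.ne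
    have hsq : ‖s‖ ^ 2 = 1 := by
      rw [← norm_pow, ← sub_add_cancel (s ^ 2) c, norm_add_eq_max_of_norm_ne_norm hne, hc,
        max_eq_right hsc.le]
    exact (pow_eq_one_iff_of_nonneg (norm_nonneg s) two_ne_zero).mp hsq
  set r := ‖s ^ 2 - c‖
  set T : ℕ → K := fun n ↦ (newtonSqrtStep c)^[n] s
  have hbound (n : ℕ) : ‖T n ^ 2 - c‖ ≤ r ^ (n + 1) :=
    (norm_iterate_newtonSqrtStep h2 hs hsc n).2
  have hdist (n : ℕ) : dist (T n) (T (n + 1)) ≤ r * r ^ n := by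
    rw [dist_comm, dist_eq_norm, ← pow_succ']
    simp only [T, Function.iterate_succ_apply']
    rw [norm_newtonSqrtStep_sub h2 (norm_iterate_newtonSqrtStep h2 hs hsc n).1]
    exact hbound n
  obtain ⟨t, ht⟩ := cauchySeq_tendsto_of_complete (cauchySeq_of_le_geometric r r hsc hdist)
  have hto_zero : Tendsto (fun n ↦ T n ^ 2 - c) atTop (𝓝 0) :=
    squeeze_zero_norm hbound
      ((tendsto_pow_atTop_nhds_zero_of_lt_one (norm_nonneg _) hsc).comp (tendsto_add_atTop_nat 1))
  exact ⟨t, sub_eq_zero.mp (tendsto_nhds_unique ((ht.pow 2).sub_const c) hto_zero)⟩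

end SqrtNewton

lemma WithZero.eq_one_of_forall_exists_pow_two_pow_eq {a : ℤᵐ⁰} (ha : a ≠ 0) {m : ℕ}
    (hm : m ≠ 0) (h : ∀ n : ℕ, ∃ b : ℤᵐ⁰, b ^ 2 ^ n = a ^ m) : a = 1 := by
  have hdvd (n : ℕ) : (2 : ℤ) ^ n ∣ m * log a := by
    obtain ⟨b, hb⟩ := h n
    have := congrArg log hb
    simp only [log_pow, nsmul_eq_mul] at this
    exact ⟨log b, by push_cast at this; linarith⟩
  have hzero : (m : ℤ) * log a = 0 :=
    Int.eq_zero_of_dvd_of_natAbs_lt_natAbs (hdvd _) (by simpa using Nat.lt_two_pow_self)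
  rw [← exp_log ha, (mul_eq_zero.mp hzero).resolve_left (by exact_mod_cast hm), exp_zero]

namespace PadicInt

variable {p : ℕ} [Fact p.Prime]

lemma norm_two (hp : p ≠ 2) : ‖(2 : ℤ_[p])‖ = 1 := by
  simpa using (norm_natCast_eq_one_iff (p := p) (n := 2)).mpr
    ((Nat.coprime_primes Fact.out Nat.prime_two).mpr hp)

open Polynomial in
lemma exists_pow_two_pow_eq (hp : p ≠ 2) {c : ℤ_[p]} (hc : ‖c - 1‖ < 1) (n : ℕ) :
    ∃ d : ℤ_[p], d ^ 2 ^ n = c := by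
  have hnorm : ‖(X ^ 2 ^ n - C c : ℤ_[p][X]).aeval (1 : ℤ_[p])‖ <
      ‖(derivative (X ^ 2 ^ n - C c : ℤ_[p][X])).aeval (1 : ℤ_[p])‖ ^ 2 := by
    simpa [norm_sub_rev, derivative_X_pow, norm_two hp] using hc
  obtain ⟨d, hd, -⟩ := hensels_lemma hnorm
  exact ⟨d, by simpa [sub_eq_zero] using hd⟩

lemma norm_pow_sub_one_sub_one_lt_one {u : ℤ_[p]} (hu : ‖u‖ = 1) :
    ‖u ^ (p - 1) - 1‖ < 1 := by
  have hmax (x : ℤ_[p]) : ‖x‖ < 1 ↔ toZMod x = 0 := by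
    rw [← RingHom.mem_ker, ker_toZMod, IsLocalRing.mem_maximalIdeal, mem_nonunits]
  have hu0 : toZMod u ≠ 0 := fun h ↦ lt_irrefl (1 : ℝ) (hu ▸ (hmax u).mpr h)
  rw [hmax, map_sub, map_pow, map_one, ZMod.pow_card_sub_one_eq_one hu0, sub_self]

end PadicInt

namespace Valuation

section AbsoluteValue

variable {K : Type*} [Field K] (v : Valuation K ℤᵐ⁰) {b : ℝ≥0} (hb : 1 < b)

lemma toNNReal_map_add_le_max (x y : K) :
    WithZeroMulInt.toNNReal (ne_zero_of_lt hb) (v (x + y)) ≤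
      max (WithZeroMulInt.toNNReal (ne_zero_of_lt hb) (v x))
        (WithZeroMulInt.toNNReal (ne_zero_of_lt hb) (v y)) := by
  rw [← (WithZeroMulInt.toNNReal_strictMono hb).monotone.map_max]
  exact (WithZeroMulInt.toNNReal_strictMono hb).monotone (v.map_add x y)

noncomputable def toAbsoluteValue : AbsoluteValue K ℝ where
  toFun x := WithZeroMulInt.toNNReal (ne_zero_of_lt hb) (v x)
  map_mul' x y := by simp
  nonneg' x := NNReal.coe_nonneg _
  eq_zero' x := by simp
  add_le' x y := by
    refine (NNReal.coe_le_coe.mpr (v.toNNReal_map_add_le_max hb x y)).trans ?_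
    rw [NNReal.coe_max]
    exact max_le_add_of_nonneg (NNReal.coe_nonneg _) (NNReal.coe_nonneg _)

lemma toAbsoluteValue_apply (x : K) :
    v.toAbsoluteValue hb x = WithZeroMulInt.toNNReal (ne_zero_of_lt hb) (v x) := rfl

lemma isNonarchimedean_toAbsoluteValue : IsNonarchimedean (v.toAbsoluteValue hb) := by
  intro x y
  simp only [toAbsoluteValue_apply, ← NNReal.coe_max, NNReal.coe_le_coe]
  exact v.toNNReal_map_add_le_max hb x y

lemma toAbsoluteValue_lt_one_iff {x : K} : v.toAbsoluteValue hb x < 1 ↔ v x < 1 := by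
  rw [toAbsoluteValue_apply, ← NNReal.coe_one, NNReal.coe_lt_coe,
    WithZeroMulInt.toNNReal_lt_one_iff hb]

lemma toAbsoluteValue_eq_one_iff {x : K} : v.toAbsoluteValue hb x = 1 ↔ v x = 1 := by
  rw [toAbsoluteValue_apply, ← NNReal.coe_one, NNReal.coe_inj,
    WithZeroMulInt.toNNReal_eq_one_iff _ _ hb.ne']

end AbsoluteValue

section Padic

variable {p : ℕ} [Fact p.Prime] {S : Type*} [Field S] [Algebra ℚ_[p] S]
  (v : Valuation S ℤᵐ⁰)

lemma map_algebraMap_eq_one_of_norm_eq_one (hp : p ≠ 2) {a : ℚ_[p]} (ha : ‖a‖ = 1) :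
    v (algebraMap ℚ_[p] S a) = 1 := by
  set u : ℤ_[p] := ⟨a, ha.le⟩
  have hu : ‖u‖ = 1 := ha
  have hva : v (algebraMap ℚ_[p] S a) ≠ 0 :=
    v.ne_zero_iff.mpr ((map_ne_zero _).mpr (norm_ne_zero_iff.mp (ha ▸ one_ne_zero)))
  refine WithZero.eq_one_of_forall_exists_pow_two_pow_eq hva (m := p - 1)
    (Nat.sub_ne_zero_of_lt (Fact.out : p.Prime).one_lt) fun n ↦ ?_
  obtain ⟨d, hd⟩ :=
    PadicInt.exists_pow_two_pow_eq hp (PadicInt.norm_pow_sub_one_sub_one_lt_one hu) n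
  refine ⟨v (algebraMap ℚ_[p] S d), ?_⟩
  simp only [← map_pow, ← PadicInt.coe_pow, hd]
  rfl

lemma map_natCast_eq_one (hp : p ≠ 2) {n : ℕ} (hn : p.Coprime n) : v (n : S) = 1 := by
  simpa using v.map_algebraMap_eq_one_of_norm_eq_one hp (Padic.norm_natCast_eq_one_iff.mpr hn)

lemma map_algebraMap_eq_zpow (hp : p ≠ 2) {a : ℚ_[p]} (ha : a ≠ 0) :
    v (algebraMap ℚ_[p] S a) = v (p : S) ^ a.valuation := by
  have hp0 : (p : ℚ_[p]) ≠ 0 := Nat.cast_ne_zero.mpr (Fact.out : p.Prime).ne_zero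
  have hunit : ‖a * (p : ℚ_[p]) ^ (-a.valuation)‖ = 1 := by
    have hpR : (p : ℝ) ≠ 0 := Nat.cast_ne_zero.mpr (Fact.out : p.Prime).ne_zero
    rw [norm_mul, norm_zpow, Padic.norm_eq_zpow_neg_valuation ha, Padic.norm_p, ← zpow_neg_one,
      ← zpow_mul, ← zpow_add₀ hpR]
    simp
  have hdecomp : a = a * (p : ℚ_[p]) ^ (-a.valuation) * (p : ℚ_[p]) ^ a.valuation := by
    rw [mul_assoc, ← zpow_add₀ hp0, neg_add_cancel, zpow_zero, mul_one]
  conv_lhs => rw [hdecomp]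
  rw [map_mul, map_mul, v.map_algebraMap_eq_one_of_norm_eq_one hp hunit, one_mul,
    map_zpow₀, map_zpow₀, map_natCast]

lemma exists_toAbsoluteValue_algebraMap_eq_norm (hp : p ≠ 2) (hvp : v (p : S) < 1) :
    ∃ (b : ℝ≥0) (hb : 1 < b),
      ∀ a : ℚ_[p], v.toAbsoluteValue hb (algebraMap ℚ_[p] S a) = ‖a‖ := by
  have hp0 : (p : ℚ_[p]) ≠ 0 := Nat.cast_ne_zero.mpr (Fact.out : p.Prime).ne_zero
  have hvp0 : v (p : S) ≠ 0 := by
    rw [← map_natCast (algebraMap ℚ_[p] S)]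
    exact v.ne_zero_iff.mpr ((map_ne_zero _).mpr hp0)
  set e := -log (v (p : S))
  have he : 0 < e := by
    rw [neg_pos, ← log_one (M := ℤ), log_lt_log hvp0 one_ne_zero]
    exact hvp
  refine ⟨(p : ℝ≥0) ^ ((e : ℝ)⁻¹),
    NNReal.one_lt_rpow (by exact_mod_cast (Fact.out : p.Prime).one_lt) (by positivity),
    fun a ↦ ?_⟩
  rcases eq_or_ne a 0 with rfl | ha
  · simp
  have hbase : ((p : ℝ≥0) ^ ((e : ℝ)⁻¹)) ^ log (v (p : S)) = (p : ℝ≥0)⁻¹ := by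
    rw [← NNReal.rpow_intCast, ← NNReal.rpow_mul, show log (v (p : S)) = -e by omega]
    rw [show (e : ℝ)⁻¹ * ((-e : ℤ) : ℝ) = -1 by push_cast; field_simp, NNReal.rpow_neg_one]
  rw [toAbsoluteValue_apply, v.map_algebraMap_eq_zpow hp ha, map_zpow₀,
    WithZeroMulInt.toNNReal_neg_apply _ hvp0, toAdd_unzero_eq_log, hbase,
    Padic.norm_eq_zpow_neg_valuation ha]
  push_cast
  rw [inv_zpow', zpow_neg]

theorem exists_sq_eq_of_map_sq_sub_lt_one [FiniteDimensional ℚ_[p] S] (hp : p ≠ 2)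
    (hvp : v (p : S) < 1) {s c : S} (hc : v c = 1) (hsc : v (s ^ 2 - c) < 1) :
    ∃ t : S, t ^ 2 = c := by
  obtain ⟨b, hb, hnorm⟩ := v.exists_toAbsoluteValue_algebraMap_eq_norm hp hvp
  let : NormedField S := (v.toAbsoluteValue hb).toNormedField
  have : IsUltrametricDist S :=
    IsUltrametricDist.isUltrametricDist_of_isNonarchimedean_norm
      (v.isNonarchimedean_toAbsoluteValue hb)
  let : NormedSpace ℚ_[p] S :=
    { norm_smul_le a x := by
        rw [Algebra.smul_def, norm_mul]
        exact (congrArg (· * ‖x‖) (hnorm a)).le }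
  have : CompleteSpace S := FiniteDimensional.complete ℚ_[p] S
  have h2 : v (2 : S) = 1 := by
    exact_mod_cast v.map_natCast_eq_one hp ((Nat.coprime_primes Fact.out Nat.prime_two).mpr hp)
  exact exists_sq_eq_of_norm_sq_sub_lt_one ((v.toAbsoluteValue_eq_one_iff hb).mpr h2)
    ((v.toAbsoluteValue_eq_one_iff hb).mpr hc) ((v.toAbsoluteValue_lt_one_iff hb).mpr hsc)

lemma exists_sq_eq_neg_one_of_map_sq_add_pow_four_lt [FiniteDimensional ℚ_[p] S] (hp : p ≠ 2)
    (hvp : v (p : S) < 1) {w z : S} (h : v (w ^ 2 + z ^ 4) < v z ^ 4) :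
    ∃ t : S, t ^ 2 = -1 := by
  have hz : z ≠ 0 := by
    rintro rfl
    simp at h
  refine v.exists_sq_eq_of_map_sq_sub_lt_one (s := w / z ^ 2) hp hvp (by simp) ?_
  have hquot : (w / z ^ 2) ^ 2 - -1 = (w ^ 2 + z ^ 4) / z ^ 4 := by
    field_simp
    ring
  rwa [hquot, map_div₀, map_pow, div_lt_one₀ (pow_pos (v.pos_iff.mpr hz) 4)]

end Padic

end Valuation

theorem stmt_12_general {S : Type*} [Field S] [Algebra ℚ_[3] S] [FiniteDimensional ℚ_[3] S]
    (v : Valuation S (WithZero (Multiplicative ℤ)))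
    (h3 : v (3 : S) < 1)
    (hneg : ¬∃ s : S, s ^ 2 = (-1 : S))
    (x y z w : S)
    (hx : v x ≤ 1) (hy : v y ≤ 1)
    (heq : w ^ 2 = -6 * x ^ 4 - 3 * y ^ 4 + 2 * z ^ 4) :
    v z < 1 ∧ v w < 1 := by
  have h3' : v ((3 : ℕ) : S) < 1 := by exact_mod_cast h3
  have h2 : v (2 : S) = 1 := by
    exact_mod_cast v.map_natCast_eq_one (p := 3) (by norm_num) (by norm_num)
  set q := 2 * x ^ 4 + y ^ 4
  have hq : v q ≤ 1 := by
    refine (v.map_add _ _).trans (max_le ?_ ?_) <;> simp only [map_mul, map_pow, h2, one_mul]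
    exacts [pow_le_one' hx 4, pow_le_one' hy 4]
  have hw : w ^ 2 = 2 * z ^ 4 - 3 * q := by linear_combination heq
  have hz : v z < 1 := by
    by_contra! hz
    refine hneg (v.exists_sq_eq_neg_one_of_map_sq_add_pow_four_lt (w := w) (z := z)
      (by norm_num) h3' ?_)
    have hz4 : v q ≤ v z ^ 4 := hq.trans (one_le_pow₀ hz)
    rw [show w ^ 2 + z ^ 4 = 3 * (z ^ 4 - q) by linear_combination hw, map_mul]
    calc v 3 * v (z ^ 4 - q) ≤ v 3 * v z ^ 4 := by
          gcongr
          exact (v.map_sub _ _).trans (max_le (map_pow v z 4).le hz4)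
      _ < v z ^ 4 := mul_lt_of_lt_one_left (pow_pos (zero_lt_one.trans_le hz) 4) h3
  refine ⟨hz, ?_⟩
  have hw2 : v w ^ 2 < 1 := by
    rw [← map_pow, hw]
    refine (v.map_sub _ _).trans_lt (max_lt ?_ ?_) <;> rw [map_mul]
    · rw [h2, one_mul, map_pow]; exact pow_lt_one₀ zero_le hz (by norm_num)
    · exact mul_lt_one_of_lt_of_le h3 hq
  exact (pow_lt_one_iff_of_nonneg zero_le two_ne_zero).mp hw2

/-- Let `S` be a finite extension of `ℚ₃` with normalized valuation `v` in which `-1` is not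
a square.  If `x, y, z, w` lie in the valuation ring with `min(v x, v y, v z, v w) = 0`
(i.e. multiplicatively `max = 1`) and `w² = -6x⁴ - 3y⁴ + 2z⁴`, then `v(z) > 0` and `v(w) > 0`
(additively), i.e. multiplicatively `v z < 1` and `v w < 1`. -/
theorem stmt_12 {S : Type*} [Field S] [Algebra ℚ_[3] S] [FiniteDimensional ℚ_[3] S]
    (v : Valuation S (WithZero (Multiplicative ℤ)))
    (hsurj : Function.Surjective v) (h3 : v (3 : S) < 1)
    (hneg : ¬∃ s : S, s ^ 2 = (-1 : S))
    (x y z w : S)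
    (hx : v x ≤ 1) (hy : v y ≤ 1) (hz : v z ≤ 1) (hw : v w ≤ 1)
    (hmin : max (max (v x) (v y)) (max (v z) (v w)) = 1)
    (heq : w ^ 2 = -6 * x ^ 4 - 3 * y ^ 4 + 2 * z ^ 4) :
    v z < 1 ∧ v w < 1 :=
  stmt_12_general v h3 hneg x y z w hx hy heq
end
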